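/- arXiv:2211.17249 — 5 statements merged into one kernel-verified Lean document; each statement's English description precedes it below -/
import Mathlib

section
/- Let G_θ = [H_u − (I_T ⊗ θ) H_x ; H_x^0] where H_u, H_x are the depth-T input and state Hankel matrices of a trajectory of x(k+1) = A x(k) + B u(k), and θ ∈ ℝ^{m×n}. Then the null space of G_θ equals the null space of the full Hankel matrix H = [H_u; H_x]. -/
open Matrix Finset

def Hx (n T L : ℕ) (xd : ℕ → Fin n → ℝ) (k : ℕ) : Matrix (Fin n) (Fin (L - T + 1)) ℝ :=
  Matrix.of fun i j => xd (k + (j : ℕ)) i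

def Hu (m T L : ℕ) (ud : ℕ → Fin m → ℝ) (k : ℕ) : Matrix (Fin m) (Fin (L - T + 1)) ℝ :=
  Matrix.of fun i j => ud (k + (j : ℕ)) i

/-- the null space of G_θ = [H_u − (I_T⊗θ)H_x ; H_x^0] equals the null
space of the full Hankel matrix H = [H_u; H_x]: v satisfies G_θ v = 0 (i.e. each input
block of H v equals θ times the corresponding state block and the first state block
vanishes) iff H v = 0 (all blocks vanish). -/
theorem nullspace_Gtheta_eq_nullspace_H (n m T L : ℕ) (hT : 1 ≤ T) (hTL : T ≤ L)
    (A : Matrix (Fin n) (Fin n) ℝ) (B : Matrix (Fin n) (Fin m) ℝ)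
    (θ : Matrix (Fin m) (Fin n) ℝ)
    (ud : ℕ → Fin m → ℝ) (xd : ℕ → Fin n → ℝ)
    (hdyn : ∀ k, k + 1 < L → xd (k + 1) = A.mulVec (xd k) + B.mulVec (ud k))
    (v : Fin (L - T + 1) → ℝ) :
    ((∀ k < T, (Hu m T L ud k).mulVec v = θ.mulVec ((Hx n T L xd k).mulVec v)) ∧
        (Hx n T L xd 0).mulVec v = 0)
      ↔ (∀ k < T, (Hu m T L ud k).mulVec v = 0 ∧ (Hx n T L xd k).mulVec v = 0) := by
  constructor
  · rintro ⟨h1, h0⟩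
    have key : ∀ k, k < T → (Hx n T L xd k).mulVec v = 0 := by
      intro k
      induction k with
      | zero => intro _; exact h0
      | succ k ih =>
        intro hk
        have hk' : k < T := by omega
        have hxk := ih hk'
        have huk : (Hu m T L ud k).mulVec v = 0 := by
          rw [h1 k hk', hxk, Matrix.mulVec_zero]
        have hstep : (Hx n T L xd (k+1)).mulVec v =
            A.mulVec ((Hx n T L xd k).mulVec v) + B.mulVec ((Hu m T L ud k).mulVec v) := by
          funext i
          simp only [Matrix.mulVec, dotProduct, Hx, Hu, Matrix.of_apply, Pi.add_apply]
          have hd : ∀ j : Fin (L - T + 1), xd (k + 1 + (j:ℕ)) i =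
              (∑ l, A i l * xd (k + (j:ℕ)) l) + ∑ l, B i l * ud (k + (j:ℕ)) l := by
            intro j
            have hlt : k + (j:ℕ) + 1 < L := by have := j.isLt; omega
            have hh := hdyn (k + (j:ℕ)) hlt
            have h2 : k + 1 + (j:ℕ) = k + (j:ℕ) + 1 := by ring
            rw [h2, hh]
            simp [Matrix.mulVec, dotProduct]
          calc ∑ j : Fin (L - T + 1), xd (k+1+(j:ℕ)) i * v j
              = ∑ j : Fin (L - T + 1), ((∑ l, A i l * (xd (k+(j:ℕ)) l * v j)) +
                  ∑ l, B i l * (ud (k+(j:ℕ)) l * v j)) := by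
                refine Finset.sum_congr rfl fun j _ => ?_
                rw [hd j, add_mul, Finset.sum_mul, Finset.sum_mul]
                simp [mul_assoc]
            _ = _ := by
                rw [Finset.sum_add_distrib]
                congr 1 <;> rw [Finset.sum_comm] <;> simp [Finset.mul_sum]
        rw [hstep, hxk, huk, Matrix.mulVec_zero, Matrix.mulVec_zero, add_zero]
    intro k hk
    exact ⟨by rw [h1 k hk, key k hk, Matrix.mulVec_zero], key k hk⟩
  · intro h
    refine ⟨fun k hk => ?_, (h 0 (by omega)).2⟩
    rw [(h k hk).1, (h k hk).2, Matrix.mulVec_zero]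
end

section
/- If v lies in the null space of G_θ = [H_u − (I_T ⊗ θ) H_x ; H_x^0], i.e. H_u^k v = θ H_x^k v for all k = 0,...,T-1 and H_x^0 v = 0, then by induction using the shift relation H_x^{k+1} = A H_x^k + B H_u^k it follows that H_x^k v = 0 and H_u^k v = 0 for all k = 0,...,T-1. -/
open Matrix Finset

/-- if H_u^k v = θ H_x^k v for all k < T, H_x^0 v = 0, and the Hankel block
rows satisfy the shift relation H_x^{k+1} = A H_x^k + B H_u^k, then by induction
H_x^k v = 0 and H_u^k v = 0 for all k < T. -/
theorem null_vector_annihilates_blocks (n m T N : ℕ)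
    (A : Matrix (Fin n) (Fin n) ℝ) (B : Matrix (Fin n) (Fin m) ℝ)
    (θ : Matrix (Fin m) (Fin n) ℝ)
    (Hx : ℕ → Matrix (Fin n) (Fin N) ℝ) (Hu : ℕ → Matrix (Fin m) (Fin N) ℝ)
    (hshift : ∀ k, k + 1 < T → Hx (k + 1) = A * Hx k + B * Hu k)
    (v : Fin N → ℝ)
    (hfeed : ∀ k < T, (Hu k).mulVec v = θ.mulVec ((Hx k).mulVec v))
    (h0 : (Hx 0).mulVec v = 0) :
    ∀ k < T, (Hx k).mulVec v = 0 ∧ (Hu k).mulVec v = 0 := by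
  intro k hk
  induction k with
  | zero =>
    refine ⟨h0, ?_⟩
    rw [hfeed 0 hk, h0, Matrix.mulVec_zero]
  | succ k ih =>
    obtain ⟨hx, hu⟩ := ih (Nat.lt_of_succ_lt hk)
    have hx' : (Hx (k + 1)).mulVec v = 0 := by
      rw [hshift k hk, Matrix.add_mulVec, ← Matrix.mulVec_mulVec, ← Matrix.mulVec_mulVec,
        hx, hu, Matrix.mulVec_zero, Matrix.mulVec_zero, add_zero]
    exact ⟨hx', by rw [hfeed (k+1) hk, hx', Matrix.mulVec_zero]⟩
end

section
/- If the stacked Hankel matrix H = [H_u; H_x] ∈ ℝ^{(Tm+Tn)×(L-T+1)} has rank n + Tm, then G_θ = [H_u − (I_T ⊗ θ) H_x ; H_x^0] ∈ ℝ^{(Tm+n)×(L-T+1)} has full row rank n + Tm, for any θ ∈ ℝ^{m×n}. -/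
open Matrix Finset

/-- if the stacked Hankel matrix H = [H_u; H_x] has rank n + Tm, then
G_θ = [H_u − (I_T⊗θ)H_x ; H_x^0] has full row rank n + Tm, for any θ. -/
theorem Gtheta_full_row_rank (n m T L : ℕ) (hT : 1 ≤ T) (hTL : T ≤ L)
    (A : Matrix (Fin n) (Fin n) ℝ) (B : Matrix (Fin n) (Fin m) ℝ)
    (θ : Matrix (Fin m) (Fin n) ℝ)
    (ud : ℕ → Fin m → ℝ) (xd : ℕ → Fin n → ℝ)
    (hdyn : ∀ k, k + 1 < L → xd (k + 1) = A.mulVec (xd k) + B.mulVec (ud k))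
    (H : Matrix ((Fin T × Fin m) ⊕ (Fin T × Fin n)) (Fin (L - T + 1)) ℝ)
    (hH : H = Matrix.of fun i (j : Fin (L - T + 1)) =>
      Sum.elim (fun p : Fin T × Fin m => ud ((p.1 : ℕ) + (j : ℕ)) p.2)
        (fun p : Fin T × Fin n => xd ((p.1 : ℕ) + (j : ℕ)) p.2) i)
    (G : Matrix ((Fin T × Fin m) ⊕ Fin n) (Fin (L - T + 1)) ℝ)
    (hG : G = Matrix.of fun i (j : Fin (L - T + 1)) =>
      Sum.elim
        (fun p : Fin T × Fin m =>
          ud ((p.1 : ℕ) + (j : ℕ)) p.2 - ∑ b, θ p.2 b * xd ((p.1 : ℕ) + (j : ℕ)) b)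
        (fun a : Fin n => xd (j : ℕ) a) i)
    (hrank : H.rank = n + T * m) :
    G.rank = n + T * m := by
  have hker : LinearMap.ker G.mulVecLin = LinearMap.ker H.mulVecLin := by
    ext v
    simp only [LinearMap.mem_ker, Matrix.mulVecLin_apply]
    constructor
    · intro hv
      -- X k = 0 for k < T
      have hX : ∀ k, k < T → ∀ b, ∑ j : Fin (L - T + 1), xd (k + (j : ℕ)) b * v j = 0 := by
        intro k
        induction k with
        | zero =>
          intro hk b
          have h0 := congrFun hv (Sum.inr b)
          simpa [hG, Matrix.mulVec, dotProduct] using h0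
        | succ k ih =>
          intro hk b
          have hXk := ih (by omega)
          have hU : ∀ a, ∑ j : Fin (L - T + 1), ud (k + (j : ℕ)) a * v j = 0 := by
            intro a
            have h1 := congrFun hv (Sum.inl (⟨k, by omega⟩, a))
            simp only [hG, Matrix.of_apply, Matrix.mulVec, dotProduct,
              Sum.elim_inl, Pi.zero_apply] at h1
            have expand : ∀ j : Fin (L - T + 1),
                (ud (k + (j : ℕ)) a - ∑ b, θ a b * xd (k + (j : ℕ)) b) * v j
                = ud (k + (j : ℕ)) a * v j - ∑ b, θ a b * (xd (k + (j : ℕ)) b * v j) := by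
              intro j
              rw [sub_mul, Finset.sum_mul]
              simp [mul_assoc]
            rw [Finset.sum_congr rfl (fun j _ => expand j), Finset.sum_sub_distrib,
              Finset.sum_comm] at h1
            have : ∀ b : Fin n, ∑ j : Fin (L - T + 1), θ a b * (xd (k + (j : ℕ)) b * v j) = 0 := by
              intro b
              rw [← Finset.mul_sum, hXk b, mul_zero]
            rw [Finset.sum_congr rfl (fun b _ => this b), Finset.sum_const_zero,
              sub_zero] at h1
            exact h1
          have key : ∀ j : Fin (L - T + 1),
              xd (k + 1 + (j : ℕ)) b * v j
              = (∑ c, A b c * xd (k + (j : ℕ)) c) * v j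
                + (∑ a, B b a * ud (k + (j : ℕ)) a) * v j := by
            intro j
            have hjL : k + (j : ℕ) + 1 < L := by
              have := j.isLt; omega
            have hd := hdyn (k + (j : ℕ)) hjL
            have : xd (k + 1 + (j : ℕ)) b
                = (∑ c, A b c * xd (k + (j : ℕ)) c) + ∑ a, B b a * ud (k + (j : ℕ)) a := by
              have : k + 1 + (j : ℕ) = (k + (j : ℕ)) + 1 := by omega
              rw [this, hd]
              simp [Matrix.mulVec, dotProduct]
            rw [this, add_mul]
          rw [Finset.sum_congr rfl (fun j _ => key j), Finset.sum_add_distrib]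
          have hA : ∑ j : Fin (L - T + 1), (∑ c, A b c * xd (k + (j : ℕ)) c) * v j = 0 := by
            have : ∀ j : Fin (L - T + 1), (∑ c, A b c * xd (k + (j : ℕ)) c) * v j
                = ∑ c, A b c * (xd (k + (j : ℕ)) c * v j) := by
              intro j; rw [Finset.sum_mul]; simp [mul_assoc]
            rw [Finset.sum_congr rfl (fun j _ => this j), Finset.sum_comm]
            refine Finset.sum_eq_zero fun c _ => ?_
            rw [← Finset.mul_sum, hXk c, mul_zero]
          have hB : ∑ j : Fin (L - T + 1), (∑ a, B b a * ud (k + (j : ℕ)) a) * v j = 0 := by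
            have : ∀ j : Fin (L - T + 1), (∑ a, B b a * ud (k + (j : ℕ)) a) * v j
                = ∑ a, B b a * (ud (k + (j : ℕ)) a * v j) := by
              intro j; rw [Finset.sum_mul]; simp [mul_assoc]
            rw [Finset.sum_congr rfl (fun j _ => this j), Finset.sum_comm]
            refine Finset.sum_eq_zero fun a _ => ?_
            rw [← Finset.mul_sum, hU a, mul_zero]
          rw [hA, hB, add_zero]
      have hU : ∀ k, k < T → ∀ a, ∑ j : Fin (L - T + 1), ud (k + (j : ℕ)) a * v j = 0 := by
        intro k hk a
        have h1 := congrFun hv (Sum.inl (⟨k, hk⟩, a))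
        simp only [hG, Matrix.of_apply, Matrix.mulVec, dotProduct,
          Sum.elim_inl, Pi.zero_apply] at h1
        have expand : ∀ j : Fin (L - T + 1),
            (ud (k + (j : ℕ)) a - ∑ b, θ a b * xd (k + (j : ℕ)) b) * v j
            = ud (k + (j : ℕ)) a * v j - ∑ b, θ a b * (xd (k + (j : ℕ)) b * v j) := by
          intro j
          rw [sub_mul, Finset.sum_mul]
          simp [mul_assoc]
        rw [Finset.sum_congr rfl (fun j _ => expand j), Finset.sum_sub_distrib,
          Finset.sum_comm] at h1
        have hz : ∀ b : Fin n, ∑ j : Fin (L - T + 1), θ a b * (xd (k + (j : ℕ)) b * v j) = 0 := by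
          intro b
          rw [← Finset.mul_sum, hX k hk b, mul_zero]
        rw [Finset.sum_congr rfl (fun b _ => hz b), Finset.sum_const_zero, sub_zero] at h1
        exact h1
      funext i
      cases i with
      | inl p => simpa [hH, Matrix.mulVec, dotProduct] using hU p.1 p.1.isLt p.2
      | inr p => simpa [hH, Matrix.mulVec, dotProduct] using hX p.1 p.1.isLt p.2
    · intro hv
      funext i
      have hXz : ∀ (k : Fin T) (b : Fin n), ∑ j : Fin (L - T + 1), xd ((k : ℕ) + (j : ℕ)) b * v j = 0 := by
        intro k b
        have := congrFun hv (Sum.inr (k, b))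
        simpa [hH, Matrix.mulVec, dotProduct] using this
      have hUz : ∀ (k : Fin T) (a : Fin m), ∑ j : Fin (L - T + 1), ud ((k : ℕ) + (j : ℕ)) a * v j = 0 := by
        intro k a
        have := congrFun hv (Sum.inl (k, a))
        simpa [hH, Matrix.mulVec, dotProduct] using this
      cases i with
      | inl p =>
        simp only [hG, Matrix.of_apply, Matrix.mulVec, dotProduct, Sum.elim_inl,
          Pi.zero_apply]
        have expand : ∀ j : Fin (L - T + 1),
            (ud ((p.1 : ℕ) + (j : ℕ)) p.2 - ∑ b, θ p.2 b * xd ((p.1 : ℕ) + (j : ℕ)) b) * v j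
            = ud ((p.1 : ℕ) + (j : ℕ)) p.2 * v j
              - ∑ b, θ p.2 b * (xd ((p.1 : ℕ) + (j : ℕ)) b * v j) := by
          intro j
          rw [sub_mul, Finset.sum_mul]
          simp [mul_assoc]
        rw [Finset.sum_congr rfl (fun j _ => expand j), Finset.sum_sub_distrib,
          Finset.sum_comm, hUz p.1 p.2]
        rw [Finset.sum_congr rfl (fun b _ => by rw [← Finset.mul_sum, hXz p.1 b, mul_zero]),
          Finset.sum_const_zero, sub_zero]
      | inr a =>
        have := hXz ⟨0, hT⟩ a
        simpa [hG, Matrix.mulVec, dotProduct] using this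
  -- rank-nullity
  have h1 := LinearMap.finrank_range_add_finrank_ker G.mulVecLin
  have h2 := LinearMap.finrank_range_add_finrank_ker H.mulVecLin
  rw [hker] at h1
  have : G.rank = H.rank := by
    simp only [Matrix.rank]
    omega
  rw [this, hrank]
end

section
/- The trajectory generated from the Hankel matrix reproduces the closed-loop system: if g solves G_θ g = [w(0); ...; w(T-1); x(0)], then the generated sequence ũ(k) = H_u^k g, x̃(k) = H_x^k g satisfies x̃(0) = x(0), ũ(k) = θ x̃(k) + w(k), and x̃(k+1) = A x̃(k) + B ũ(k) for all k = 0,...,T-1 (resp. T-2); i.e., it coincides with the trajectory of the system under the perturbed feedback policy u = θx + w starting from x(0). -/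
open Matrix Finset

/-- if g solves G_θ g = [w(0);...;w(T-1);x(0)], then the generated
sequence ũ(k)=H_u^k g, x̃(k)=H_x^k g satisfies x̃(0)=x(0), ũ(k)=θ x̃(k)+w(k), and
x̃(k+1)=A x̃(k)+B ũ(k): it is the closed-loop trajectory under u=θx+w from x(0). -/
theorem generated_trajectory_closed_loop (n m T L : ℕ) (hT : 1 ≤ T) (hTL : T ≤ L)
    (A : Matrix (Fin n) (Fin n) ℝ) (B : Matrix (Fin n) (Fin m) ℝ)
    (θ : Matrix (Fin m) (Fin n) ℝ)
    (ud : ℕ → Fin m → ℝ) (xd : ℕ → Fin n → ℝ)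
    (hdyn : ∀ k, k + 1 < L → xd (k + 1) = A.mulVec (xd k) + B.mulVec (ud k))
    (w : ℕ → Fin m → ℝ) (x0 : Fin n → ℝ) (g : Fin (L - T + 1) → ℝ)
    (hfeed : ∀ k < T,
      (Hu m T L ud k).mulVec g - θ.mulVec ((Hx n T L xd k).mulVec g) = w k)
    (hx0 : (Hx n T L xd 0).mulVec g = x0) :
    (Hx n T L xd 0).mulVec g = x0 ∧
    (∀ k < T, (Hu m T L ud k).mulVec g = θ.mulVec ((Hx n T L xd k).mulVec g) + w k) ∧
    (∀ k, k + 1 < T → (Hx n T L xd (k + 1)).mulVec g =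
      A.mulVec ((Hx n T L xd k).mulVec g) + B.mulVec ((Hu m T L ud k).mulVec g)) := by
  refine ⟨hx0, ?_, ?_⟩
  · intro k hk
    have := hfeed k hk
    linear_combination (norm := module) this
  · intro k hk
    have hM : Hx n T L xd (k + 1) = A * Hx n T L xd k + B * Hu m T L ud k := by
      ext i j
      have hj : (j : ℕ) ≤ L - T := by omega
      have hlt : k + (j : ℕ) + 1 < L := by omega
      have := hdyn (k + (j : ℕ)) hlt
      have h2 := congrFun this i
      simp only [Hx, Hu, Matrix.of_apply, Matrix.add_apply, Matrix.mul_apply,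
        Pi.add_apply, Matrix.mulVec, dotProduct] at *
      rw [show k + 1 + (j : ℕ) = k + (j : ℕ) + 1 by ring, h2]
    rw [hM, Matrix.add_mulVec, Matrix.mulVec_mulVec, Matrix.mulVec_mulVec]
end

section
/- For the input-output Hankel matrices, if v satisfies H_u^k v = θ H_y^k v for k = T₀−1,...,T−1 and the extended initial state blocks vanish (H_y^k v = 0 for k = 0,...,T₀−1 and H_u^k v = 0 for k = 0,...,T₀−2), and rank 𝒪_{T₀} = n, then H_y^k v = 0 and H_u^k v = 0 for all k = 0,...,T−1; i.e., null(G_θ) = null(H) in the output-feedback case. -/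
open Matrix Finset

def obsMat (n q T₀ : ℕ) (A : Matrix (Fin n) (Fin n) ℝ) (C : Matrix (Fin q) (Fin n) ℝ) :
    Matrix (Fin T₀ × Fin q) (Fin n) ℝ :=
  Matrix.of fun p b => (C * A ^ (p.1 : ℕ)) p.2 b

def Hy (q T L : ℕ) (yd : ℕ → Fin q → ℝ) (k : ℕ) : Matrix (Fin q) (Fin (L - T + 1)) ℝ :=
  Matrix.of fun i j => yd (k + (j : ℕ)) i

/-- output-feedback null-space identity. If H_u^k v = θ H_y^k v for
k = T₀-1,...,T-1, the extended-initial-state blocks vanish (H_y^k v = 0 for k < T₀,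
H_u^k v = 0 for k ≤ T₀-2), and the depth-T₀ observability matrix has rank n, then
H_y^k v = 0 and H_u^k v = 0 for all k < T: null(G_θ) = null(H). -/
theorem output_nullspace (n m q T₀ T L : ℕ) (hT₀ : 1 ≤ T₀) (hT₀T : T₀ ≤ T) (hTL : T ≤ L)
    (A : Matrix (Fin n) (Fin n) ℝ) (B : Matrix (Fin n) (Fin m) ℝ)
    (C : Matrix (Fin q) (Fin n) ℝ) (θ : Matrix (Fin m) (Fin q) ℝ)
    (hobs : (obsMat n q T₀ A C).rank = n)
    (ud : ℕ → Fin m → ℝ) (xd : ℕ → Fin n → ℝ) (yd : ℕ → Fin q → ℝ)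
    (hdyn : ∀ k, k + 1 < L → xd (k + 1) = A.mulVec (xd k) + B.mulVec (ud k))
    (hout : ∀ k < L, yd k = C.mulVec (xd k))
    (v : Fin (L - T + 1) → ℝ)
    (hfeed : ∀ k, T₀ - 1 ≤ k → k < T →
      (Hu m T L ud k).mulVec v = θ.mulVec ((Hy q T L yd k).mulVec v))
    (hy0 : ∀ k < T₀, (Hy q T L yd k).mulVec v = 0)
    (hu0 : ∀ k, k + 1 < T₀ → (Hu m T L ud k).mulVec v = 0) :
    ∀ k < T, (Hy q T L yd k).mulVec v = 0 ∧ (Hu m T L ud k).mulVec v = 0 := by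
  have hbound : ∀ (k : ℕ) (j : Fin (L - T + 1)), k < T → k + (j : ℕ) < L := by
    intro k j hk
    have hj : (j : ℕ) ≤ L - T := Nat.lt_succ_iff.mp j.2
    omega
  set w : ℕ → Fin n → ℝ := fun k b => ∑ j : Fin (L - T + 1), v j * xd (k + j) b with hwdef
  -- Hy block applied to v equals C · w k
  have hyw : ∀ k < T, (Hy q T L yd k).mulVec v = C.mulVec (w k) := by
    intro k hk
    funext i
    simp only [Matrix.mulVec, dotProduct, Hy, Matrix.of_apply, hwdef]
    calc ∑ j : Fin (L - T + 1), yd (k + (j : ℕ)) i * v j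
        = ∑ j : Fin (L - T + 1), v j * ∑ b, C i b * xd (k + (j : ℕ)) b := by
          refine Finset.sum_congr rfl fun j _ => ?_
          rw [hout _ (hbound k j hk)]
          simp only [Matrix.mulVec, dotProduct]
          ring
      _ = ∑ b, C i b * ∑ j, v j * xd (k + (j : ℕ)) b := by
          simp only [Finset.mul_sum]
          rw [Finset.sum_comm]
          exact Finset.sum_congr rfl fun b _ => Finset.sum_congr rfl fun j _ => by ring
  -- dynamics of w
  have hstep : ∀ k, k + 1 < T →
      w (k + 1) = A.mulVec (w k) + B.mulVec ((Hu m T L ud k).mulVec v) := by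
    intro k hk1
    funext b
    have hL : ∀ j : Fin (L - T + 1), k + (j : ℕ) + 1 < L := by
      intro j
      have := hbound (k + 1) j hk1
      omega
    simp only [hwdef, Pi.add_apply]
    calc ∑ j : Fin (L - T + 1), v j * xd (k + 1 + (j : ℕ)) b
        = ∑ j : Fin (L - T + 1), (v j * ∑ a, A b a * xd (k + (j : ℕ)) a
            + v j * ∑ i, B b i * ud (k + (j : ℕ)) i) := by
          refine Finset.sum_congr rfl fun j _ => ?_
          have hkj : k + 1 + (j : ℕ) = (k + (j : ℕ)) + 1 := by omega
          rw [hkj, hdyn _ (hL j)]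
          simp only [Pi.add_apply, Matrix.mulVec, dotProduct]
          ring
      _ = (∑ a, A b a * ∑ j : Fin (L - T + 1), v j * xd (k + (j : ℕ)) a)
            + ∑ i, B b i * ∑ j : Fin (L - T + 1), ud (k + (j : ℕ)) i * v j := by
          rw [Finset.sum_add_distrib]
          congr 1
          · simp only [Finset.mul_sum]
            rw [Finset.sum_comm]
            exact Finset.sum_congr rfl fun a _ => Finset.sum_congr rfl fun j _ => by ring
          · simp only [Finset.mul_sum]
            rw [Finset.sum_comm]
            exact Finset.sum_congr rfl fun i _ => Finset.sum_congr rfl fun j _ => by ring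
      _ = A.mulVec (w k) b + B.mulVec ((Hu m T L ud k).mulVec v) b := by
          simp only [Matrix.mulVec, dotProduct, Hu, Matrix.of_apply, hwdef]
  -- w i = A^i · w 0 for i < T₀
  have hwpow : ∀ i < T₀, w i = (A ^ i).mulVec (w 0) := by
    intro i
    induction i with
    | zero => intro _; simp
    | succ i ih =>
      intro hi
      have hi' : i < T₀ := by omega
      rw [hstep i (by omega), hu0 i hi, Matrix.mulVec_zero, add_zero, ih hi',
        Matrix.mulVec_mulVec, ← pow_succ']
  -- observability kills w 0
  have hobsvec : (obsMat n q T₀ A C).mulVec (w 0) = 0 := by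
    funext p
    have h1 : (obsMat n q T₀ A C).mulVec (w 0) p
        = ((C * A ^ (p.1 : ℕ)).mulVec (w 0)) p.2 := by
      simp only [Matrix.mulVec, dotProduct, obsMat, Matrix.of_apply]
    have h2 : (C * A ^ (p.1 : ℕ)).mulVec (w 0) = C.mulVec (w (p.1 : ℕ)) := by
      rw [← Matrix.mulVec_mulVec, ← hwpow _ p.1.2]
    have h3 : C.mulVec (w (p.1 : ℕ)) = 0 := by
      rw [← hyw _ (lt_of_lt_of_le p.1.2 hT₀T)]
      exact hy0 _ p.1.2
    rw [h1, h2, h3]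
    rfl
  have hw0 : w 0 = 0 := by
    have hrn := LinearMap.finrank_range_add_finrank_ker (obsMat n q T₀ A C).mulVecLin
    have hdom : Module.finrank ℝ (Fin n → ℝ) = n := by simp
    rw [hdom] at hrn
    have hrank : Module.finrank ℝ (LinearMap.range (obsMat n q T₀ A C).mulVecLin) = n :=
      hobs
    have hker : Module.finrank ℝ (LinearMap.ker (obsMat n q T₀ A C).mulVecLin) = 0 := by
      omega
    have hkbot : LinearMap.ker (obsMat n q T₀ A C).mulVecLin = ⊥ :=
      Submodule.finrank_eq_zero.mp hker
    have : w 0 ∈ LinearMap.ker (obsMat n q T₀ A C).mulVecLin := by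
      simp only [LinearMap.mem_ker, Matrix.mulVecLin_apply]
      exact hobsvec
    rw [hkbot] at this
    exact this
  -- Hu block vanishes whenever w k = 0
  have huzero : ∀ k < T, w k = 0 → (Hu m T L ud k).mulVec v = 0 := by
    intro k hk hwk
    by_cases h : k + 1 < T₀
    · exact hu0 k h
    · rw [hfeed k (by omega) hk, hyw k hk, hwk, Matrix.mulVec_zero, Matrix.mulVec_zero]
  -- main induction
  have key : ∀ k, k < T → w k = 0 := by
    intro k
    induction k with
    | zero => intro _; exact hw0
    | succ k ih =>
      intro hk1
      have hk : k < T := by omega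
      have hwk := ih hk
      rw [hstep k hk1, hwk, huzero k hk hwk, Matrix.mulVec_zero, Matrix.mulVec_zero,
        add_zero]
  intro k hk
  refine ⟨?_, huzero k hk (key k hk)⟩
  rw [hyw k hk, key k hk, Matrix.mulVec_zero]
end
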